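/- arXiv:2306.01490 — 7 statements merged into one kernel-verified Lean document; each statement's English description precedes it below -/
import Mathlib

section
/- Let F be a field, V a vector space over F, and n ≥ 1. If D : V^n → F is a nonzero function satisfying the main equation, i.e. for every (n+1)-tuple of vectors v_1, …, v_n, b in V one has D(v_1,…,v_n)·b = Σ_{k=1}^{n} D(v_1,…,v_{k-1}, b, v_{k+1},…,v_n)·v_k (where the k-th summand is obtained by replacing v_k with b), then there exists an n-tuple of vectors v_1, …, v_n in V such that every element of V is a linear combination of v_1, …, v_n (i.e. some n vectors span V). -/
/-- The "main equation" for a function `D : V^n → F`: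
for every `(n+1)`-tuple `v₁, …, vₙ, b`,
`D(v₁,…,vₙ) • b = ∑ₖ D(v₁,…,b,…,vₙ) • vₖ` (the `k`-th summand replaces `vₖ` by `b`). -/
def MainEq (F : Type*) {V : Type*} [Field F] [AddCommGroup V] [Module F V]
    (n : ℕ) (D : (Fin n → V) → F) : Prop :=
  ∀ (v : Fin n → V) (b : V),
    D v • b = ∑ k : Fin n, D (Function.update v k b) • v k

/-- An `n`-determinant on `V`: a nonzero function `D : V^n → F` satisfying the main
equation, where moreover the dimension of `V` over `F` equals `n`. -/
def IsDeterminant (F V : Type*) [Field F] [AddCommGroup V] [Module F V]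
    (n : ℕ) (D : (Fin n → V) → F) : Prop :=
  D ≠ 0 ∧ MainEq F n D ∧ Module.finrank F V = n

/-- `D : V^n → F` is multilinear: additive and homogeneous of degree 1
in each variable separately. -/
def IsMultilinearFn (F : Type*) {V : Type*} [Field F] [AddCommGroup V] [Module F V]
    (n : ℕ) (D : (Fin n → V) → F) : Prop :=
  (∀ (v : Fin n → V) (k : Fin n) (u w : V),
      D (Function.update v k (u + w))
        = D (Function.update v k u) + D (Function.update v k w)) ∧
  (∀ (v : Fin n → V) (k : Fin n) (c : F) (u : V),
      D (Function.update v k (c • u)) = c * D (Function.update v k u))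

/-- `D : V^n → F` is antisymmetric: interchanging any two arguments changes the sign. -/
def IsAntisymmetricFn (F : Type*) {V : Type*} [Field F] [AddCommGroup V] [Module F V]
    (n : ℕ) (D : (Fin n → V) → F) : Prop :=
  ∀ (v : Fin n → V) (i j : Fin n), i ≠ j → D (v ∘ Equiv.swap i j) = - D v

theorem stmt_0 (F V : Type*) [Field F] [AddCommGroup V] [Module F V]
    (n : ℕ) (hn : 1 ≤ n) (D : (Fin n → V) → F) (hD : D ≠ 0)
    (hmain : MainEq F n D) :
    ∃ v : Fin n → V, Submodule.span F (Set.range v) = ⊤ := by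
  obtain ⟨v, hv⟩ := Function.ne_iff.mp hD
  refine ⟨v, eq_top_iff.mpr fun b _ => ?_⟩
  have h := hmain v b
  have : b = (D v)⁻¹ • ∑ k : Fin n, D (Function.update v k b) • v k := by
    rw [← h, smul_smul, inv_mul_cancel₀ hv, one_smul]
  rw [this]
  exact Submodule.smul_mem _ _ (Submodule.sum_mem _ fun k _ =>
    Submodule.smul_mem _ _ (Submodule.subset_span ⟨k, rfl⟩))
end

section
/- Let F be a field, V a vector space over F, n > 1, and D an n-determinant on V. If the vectors v_1, …, v_n ∈ V are linearly dependent, then D(v_1,…,v_n) = 0. -/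
theorem stmt_3 (F V : Type*) [Field F] [AddCommGroup V] [Module F V]
    (n : ℕ) (hn : 1 < n) (D : (Fin n → V) → F)
    (hD : IsDeterminant F V n D)
    (v : Fin n → V) (hdep : ¬ LinearIndependent F v) :
    D v = 0 := by
  obtain ⟨-, hmain, hrank⟩ := hD
  by_contra hDv
  -- span of the vectors is a proper subspace
  have hle : Set.finrank F (Set.range v) ≤ n := by
    simpa using finrank_range_le_card v
  have hne : Set.finrank F (Set.range v) ≠ n := by
    intro h
    exact hdep (linearIndependent_iff_card_eq_finrank_span.mpr (by simpa using h.symm))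
  have hspan : Submodule.span F (Set.range v) ≠ ⊤ := by
    intro h
    apply hne
    rw [Set.finrank, h, finrank_top, hrank]
  obtain ⟨b, -, hb⟩ := SetLike.exists_of_lt (show Submodule.span F (Set.range v) < ⊤ from lt_top_iff_ne_top.mpr hspan)
  apply hb
  have hsum : D v • b ∈ Submodule.span F (Set.range v) := by
    rw [hmain v b]
    exact Submodule.sum_mem _ fun k _ =>
      Submodule.smul_mem _ _ (Submodule.subset_span (Set.mem_range_self k))
  have : b = (D v)⁻¹ • (D v • b) := by
    rw [smul_smul, inv_mul_cancel₀ hDv, one_smul]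
  rw [this]
  exact Submodule.smul_mem _ _ hsum
end

section
/- Let F be a field, V a vector space over F, n ≥ 1, and D an n-determinant on V. Then D is homogeneous of degree 1 in each variable: for all v_1, …, v_n ∈ V, every index k ≤ n, and every scalar c ∈ F, D(v_1,…,c·v_k,…,v_n) = c·D(v_1,…,v_k,…,v_n). -/
theorem stmt_4 (F V : Type*) [Field F] [AddCommGroup V] [Module F V]
    (n : ℕ) (hn : 1 ≤ n) (D : (Fin n → V) → F)
    (hD : IsDeterminant F V n D) :
    ∀ (v : Fin n → V) (k : Fin n) (c : F),
      D (Function.update v k (c • v k)) = c * D v := by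
  obtain ⟨hD0, hme, hdim⟩ := hD
  have hzero : ∀ w : Fin n → V, Submodule.span F (Set.range w) ≠ ⊤ → D w = 0 := by
    intro w hspan
    by_contra h
    obtain ⟨b, hb⟩ : ∃ b, b ∉ Submodule.span F (Set.range w) := by
      by_contra hb
      push_neg at hb
      exact hspan (Submodule.eq_top_iff'.mpr hb)
    apply hb
    have hb' : b = (D w)⁻¹ • (D w • b) := by
      rw [smul_smul, inv_mul_cancel₀ h, one_smul]
    rw [hb', hme w b]
    exact Submodule.smul_mem _ _ (Submodule.sum_mem _ fun j _ =>
      Submodule.smul_mem _ _ (Submodule.subset_span ⟨j, rfl⟩))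
  intro v k c
  by_cases hv : LinearIndependent F v
  · have h := hme v (c • v k)
    have hL : D v • (c • v k) = (c * D v) • v k := by rw [smul_smul, mul_comm]
    rw [hL] at h
    have hsum : ∑ j : Fin n,
        (D (Function.update v j (c • v k)) - if j = k then c * D v else 0) • v j = 0 := by
      simp only [sub_smul, Finset.sum_sub_distrib, ← h]
      simp [ite_smul, Finset.sum_ite_eq']
    have hk := Fintype.linearIndependent_iff.mp hv _ hsum k
    simp only [if_pos rfl] at hk
    exact sub_eq_zero.mp hk
  · have hfd : FiniteDimensional F V := FiniteDimensional.of_finrank_pos (by omega : 0 < Module.finrank F V)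
    have hspan : Submodule.span F (Set.range v) ≠ ⊤ := by
      intro htop
      apply hv
      have hb := (basisOfTopLeSpanOfCardEqFinrank v htop.ge
        (by simp [hdim])).linearIndependent
      rwa [coe_basisOfTopLeSpanOfCardEqFinrank] at hb
    have hspan2 : Submodule.span F (Set.range (Function.update v k (c • v k))) ≠ ⊤ := by
      intro htop
      apply hspan
      rw [← top_le_iff, ← htop]
      apply Submodule.span_le.mpr
      rintro x ⟨j, rfl⟩
      rcases eq_or_ne j k with rfl | hj
      · simp only [Function.update_self]
        exact Submodule.smul_mem _ _ (Submodule.subset_span ⟨j, rfl⟩)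
      · rw [Function.update_of_ne hj]
        exact Submodule.subset_span ⟨j, rfl⟩
    rw [hzero _ hspan2, hzero _ hspan, mul_zero]
end

section
/- Let F be a field, V a vector space over F, n ≥ 1, and D an n-determinant on V. Then D is additive in each variable: for all v_1, …, v_n ∈ V, every index k ≤ n, and every vector w ∈ V, D(v_1,…,v_k + w,…,v_n) = D(v_1,…,v_k,…,v_n) + D(v_1,…,w,…,v_n), where in the last two terms the k-th argument is v_k and w respectively. -/
theorem stmt_5 (F V : Type*) [Field F] [AddCommGroup V] [Module F V]
    (n : ℕ) (hn : 1 ≤ n) (D : (Fin n → V) → F)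
    (hD : IsDeterminant F V n D) :
    ∀ (v : Fin n → V) (k : Fin n) (w : V),
      D (Function.update v k (v k + w)) = D v + D (Function.update v k w) := by
  obtain ⟨-, hmain, hrank⟩ := hD
  -- If a tuple is linearly dependent, then D vanishes on it.
  have hzero : ∀ u : Fin n → V, ¬ LinearIndependent F u → D u = 0 := by
    intro u hu
    by_contra hDu
    have hspan : ¬ ((⊤ : Submodule F V) ≤ Submodule.span F (Set.range u)) := by
      intro h
      exact hu (linearIndependent_of_top_le_span_of_card_eq_finrank h (by simp [hrank]))
    obtain ⟨b, -, hb⟩ := SetLike.not_le_iff_exists.mp hspan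
    apply hb
    have hm := hmain u b
    have hmem : D u • b ∈ Submodule.span F (Set.range u) := by
      rw [hm]
      exact Submodule.sum_mem _ fun i _ =>
        Submodule.smul_mem _ _ (Submodule.subset_span ⟨i, rfl⟩)
    have : (D u)⁻¹ • (D u • b) ∈ Submodule.span F (Set.range u) :=
      Submodule.smul_mem _ _ hmem
    rwa [smul_smul, inv_mul_cancel₀ hDu, one_smul] at this
  intro v k w
  by_cases hex : ∃ x, LinearIndependent F (Function.update v k x)
  · obtain ⟨x, hx⟩ := hex
    set u := Function.update v k x with hu
    have hcard : Fintype.card (Fin n) = Module.finrank F V := by simp [hrank]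
    haveI : Nonempty (Fin n) := Fin.pos_iff_nonempty.mp hn
    let B := basisOfLinearIndependentOfCardEqFinrank hx hcard
    have hB : ∀ j, B j = u j := fun j => by
      simp [B, coe_basisOfLinearIndependentOfCardEqFinrank]
    have hrepr : ∀ (b : V) (j : Fin n),
        D (Function.update u j b) = D u * B.repr b j := by
      intro b j
      have hsum : ∑ i, (B.repr b i) • u i = b := by
        conv_rhs => rw [← B.sum_repr b]
        exact Finset.sum_congr rfl fun i _ => by rw [hB]
      have key : ∑ i, (D (Function.update u i b) - D u * B.repr b i) • u i = 0 := by
        simp only [sub_smul, Finset.sum_sub_distrib, mul_smul]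
        rw [← hmain u b, ← Finset.smul_sum, hsum, sub_self]
      have h0 := linearIndependent_iff'.mp hx Finset.univ _ key j (Finset.mem_univ j)
      exact sub_eq_zero.mp h0
    have hk : ∀ b, Function.update u k b = Function.update v k b := fun b => by
      rw [hu, Function.update_idem]
    have h1 := hrepr (v k + w) k
    have h2 := hrepr (v k) k
    have h3 := hrepr w k
    rw [hk] at h1 h2 h3
    rw [Function.update_eq_self] at h2
    rw [h1, h2, h3, map_add, Finsupp.add_apply, mul_add]
  · push_neg at hex
    have e1 : D (Function.update v k (v k + w)) = 0 := hzero _ (hex _)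
    have e2 : D (Function.update v k w) = 0 := hzero _ (hex _)
    have e3 : D v = 0 := by
      have := hzero _ (hex (v k))
      rwa [Function.update_eq_self] at this
    rw [e1, e2, e3, add_zero]
end

section
/- Let F be a field, V a vector space over F, n > 1, and D an n-determinant on V. Then D is antisymmetric: for all v_1, …, v_n ∈ V and all indices i < j ≤ n, interchanging the i-th and j-th arguments changes the sign of D, i.e. D(v_1,…,v_j,…,v_i,…,v_n) = −D(v_1,…,v_i,…,v_j,…,v_n). -/
open Function Module

section

variable {F V : Type*} [Field F] [AddCommGroup V] [Module F V] {n : ℕ} {D : (Fin n → V) → F}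

def IsMultilinearFn.toAlternatingMap (hml : IsMultilinearFn F n D)
    (halt : ∀ (v : Fin n → V) (i j : Fin n), v i = v j → i ≠ j → D v = 0) :
    V [⋀^Fin n]→ₗ[F] F where
  toFun := D
  map_update_add' v k u w := by
    convert hml.1 v k u w
  map_update_smul' v k c u := by
    rw [smul_eq_mul]
    convert hml.2 v k c u
  map_eq_zero_of_eq' := halt

theorem IsMultilinearFn.isAntisymmetricFn (hml : IsMultilinearFn F n D)
    (halt : ∀ (v : Fin n → V) (i j : Fin n), v i = v j → i ≠ j → D v = 0) :
    IsAntisymmetricFn F n D := fun v _ _ hij =>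
  (hml.toAlternatingMap halt).map_swap v hij

namespace MainEq

theorem top_le_span (hD : MainEq F n D) {v : Fin n → V} (hv : D v ≠ 0) :
    ⊤ ≤ Submodule.span F (Set.range v) := by
  intro b _
  have hb : b = (D v)⁻¹ • (D v • b) := by rw [smul_smul, inv_mul_cancel₀ hv, one_smul]
  rw [hb, hD v b]
  exact Submodule.smul_mem _ _ <| Submodule.sum_mem _ fun k _ =>
    Submodule.smul_mem _ _ (Submodule.subset_span ⟨k, rfl⟩)

theorem linearIndependent (hD : MainEq F n D) (hdim : finrank F V = n) {v : Fin n → V}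
    (hv : D v ≠ 0) : LinearIndependent F v :=
  linearIndependent_of_top_le_span_of_card_eq_finrank (hD.top_le_span hv) (by simp [hdim])

theorem apply_update_basis (hD : MainEq F n D) (B : Basis (Fin n) F V) (k : Fin n) (b : V) :
    D (update B k b) = D B * B.repr b k := by
  have h := congrArg (fun x => B.repr x k) (hD B b)
  simp only [map_smul, map_sum, Finsupp.smul_apply, Finsupp.coe_finsetSum, Finset.sum_apply,
    Basis.repr_self, Finsupp.single_apply, smul_eq_mul, mul_ite, mul_one, mul_zero,
    Finset.sum_ite_eq', Finset.mem_univ, if_true] at h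
  exact h.symm

theorem exists_linearMap_update (hD : MainEq F n D) (hdim : finrank F V = n)
    (v : Fin n → V) (k : Fin n) : ∃ f : V →ₗ[F] F, ∀ b, D (update v k b) = f b := by
  by_cases hzero : ∀ b, D (update v k b) = 0
  · exact ⟨0, hzero⟩
  push Not at hzero
  obtain ⟨w, hw⟩ := hzero
  have : Nonempty (Fin n) := ⟨k⟩
  let B := basisOfLinearIndependentOfCardEqFinrank (hD.linearIndependent hdim hw)
    (by simp [hdim])
  have hB : ⇑B = update v k w := coe_basisOfLinearIndependentOfCardEqFinrank ..
  refine ⟨D B • B.coord k, fun b => ?_⟩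
  simpa [hB] using hD.apply_update_basis B k b

theorem isMultilinearFn (hD : MainEq F n D) (hdim : finrank F V = n) :
    IsMultilinearFn F n D := by
  refine ⟨fun v k u w => ?_, fun v k c u => ?_⟩ <;>
  · obtain ⟨f, hf⟩ := hD.exists_linearMap_update hdim v k
    simp [hf]

theorem eq_zero_of_eq (hD : MainEq F n D) (hdim : finrank F V = n) (v : Fin n → V)
    (i j : Fin n) (hv : v i = v j) (hij : i ≠ j) : D v = 0 := by
  by_contra h
  exact hij ((hD.linearIndependent hdim h).injective hv)

theorem isAntisymmetricFn (hD : MainEq F n D) (hdim : finrank F V = n) :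
    IsAntisymmetricFn F n D :=
  (hD.isMultilinearFn hdim).isAntisymmetricFn (hD.eq_zero_of_eq hdim)

end MainEq

end

theorem stmt_6_general (F V : Type*) [Field F] [AddCommGroup V] [Module F V]
    (n : ℕ) (D : (Fin n → V) → F)
    (hD : IsDeterminant F V n D) :
    ∀ (v : Fin n → V) (i j : Fin n), i < j →
      D (v ∘ Equiv.swap i j) = - D v := by
  obtain ⟨-, hmain, hdim⟩ := hD
  intro v i j hij
  exact hmain.isAntisymmetricFn hdim v i j hij.ne

theorem stmt_6 (F V : Type*) [Field F] [AddCommGroup V] [Module F V]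
    (n : ℕ) (hn : 1 < n) (D : (Fin n → V) → F)
    (hD : IsDeterminant F V n D) :
    ∀ (v : Fin n → V) (i j : Fin n), i < j →
      D (v ∘ Equiv.swap i j) = - D v :=
  stmt_6_general F V n D hD
end

section
/- Let F be a field, V a vector space over F, n > 1, and D an n-determinant on V. Then for vectors v_1, …, v_n ∈ V, D(v_1,…,v_n) ≠ 0 if and only if v_1, …, v_n are linearly independent over F. -/
/-!
Fix `v` with `D v ≠ 0`. Dividing the main equation by `D v` writes every vector as a
combination of the `vₖ`, so they span `V` and, as there are `dim V` of them, form a basis.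
Expanding the main equation for that basis `e` in coordinates gives
`D(e₁,…,b,…,eₙ) = D e · (k-th coordinate of b)`, so `D` is linear in each slot; and it
vanishes on tuples with repeated entries, which are not independent. Hence `D` is an
alternating form, and a nonzero alternating form of top degree cannot vanish on a basis.
-/

section

open Function Module

variable {F V : Type*} [Field F] [AddCommGroup V] [Module F V] {n : ℕ}
  {D : (Fin n → V) → F}

theorem MainEq.top_le_span_of_ne_zero (hD : MainEq F n D) {v : Fin n → V} (hv : D v ≠ 0) :
    ⊤ ≤ Submodule.span F (Set.range v) := by
  intro b _
  have hb : b = (D v)⁻¹ • ∑ k, D (update v k b) • v k := by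
    rw [← hD v b, smul_smul, inv_mul_cancel₀ hv, one_smul]
  rw [hb]
  exact Submodule.smul_mem _ _ <| Submodule.sum_mem _ fun k _ ↦
    Submodule.smul_mem _ _ <| Submodule.subset_span ⟨k, rfl⟩

theorem MainEq.apply_update_basis_s7 (hD : MainEq F n D) (e : Basis (Fin n) F V) (k : Fin n)
    (b : V) : D (update e k b) = D e * e.repr b k := by
  have h := congrArg (fun x ↦ e.repr x k) (hD e b)
  simp only [e.repr_sum_self, map_smul, Finsupp.smul_apply, smul_eq_mul] at h
  exact h.symm

namespace IsDeterminant

theorem linearIndependent_of_ne_zero (hD : IsDeterminant F V n D) {v : Fin n → V}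
    (hv : D v ≠ 0) : LinearIndependent F v :=
  linearIndependent_of_top_le_span_of_card_eq_finrank (hD.2.1.top_le_span_of_ne_zero hv)
    (by rw [Fintype.card_fin, hD.2.2])

noncomputable def basisOfNeZero (hD : IsDeterminant F V n D) {v : Fin n → V}
    (hv : D v ≠ 0) : Basis (Fin n) F V :=
  .mk (hD.linearIndependent_of_ne_zero hv) (hD.2.1.top_le_span_of_ne_zero hv)

@[simp]
theorem coe_basisOfNeZero (hD : IsDeterminant F V n D) {v : Fin n → V} (hv : D v ≠ 0) :
    ⇑(hD.basisOfNeZero hv) = v :=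
  Basis.coe_mk _ _

theorem isLinearMap_update (hD : IsDeterminant F V n D) (v : Fin n → V) (k : Fin n) :
    IsLinearMap F (fun b ↦ D (update v k b)) := by
  by_cases h : ∃ b₀, D (update v k b₀) ≠ 0
  · obtain ⟨b₀, hb₀⟩ := h
    let e := hD.basisOfNeZero hb₀
    have hDe : ∀ b, D (update v k b) = (D e • e.coord k) b := fun b ↦ by
      simpa [e] using hD.2.1.apply_update_basis_s7 e k b
    simp only [hDe]
    exact (D e • e.coord k).isLinear
  · push Not at h
    simp only [h]
    exact (0 : V →ₗ[F] F).isLinear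

noncomputable def toAlternatingMap (hD : IsDeterminant F V n D) : V [⋀^Fin n]→ₗ[F] F where
  toFun := D
  map_update_add' m i x y := by
    convert (hD.isLinearMap_update m i).map_add x y
  map_update_smul' m i c x := by
    convert (hD.isLinearMap_update m i).map_smul c x
  map_eq_zero_of_eq' v i j hij hne := by
    by_contra hv
    exact hne ((hD.linearIndependent_of_ne_zero hv).injective hij)

@[simp]
theorem toAlternatingMap_apply (hD : IsDeterminant F V n D) (v : Fin n → V) :
    hD.toAlternatingMap v = D v :=
  rfl

end IsDeterminant

end

theorem stmt_7_general (F V : Type*) [Field F] [AddCommGroup V] [Module F V]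
    (n : ℕ) (D : (Fin n → V) → F)
    (hD : IsDeterminant F V n D) (v : Fin n → V) :
    D v ≠ 0 ↔ LinearIndependent F v := by
  refine ⟨hD.linearIndependent_of_ne_zero, fun hli hv ↦ ?_⟩
  obtain ⟨w, hw⟩ : ∃ w, D w ≠ 0 := by simpa [funext_iff] using hD.1
  have : FiniteDimensional F V := .of_basis (hD.basisOfNeZero hw)
  let e := basisOfLinearIndependentOfCardEqFinrank' v hli (by rw [Fintype.card_fin, hD.2.2])
  have hzero : hD.toAlternatingMap = 0 :=
    (hD.toAlternatingMap.map_basis_eq_zero_iff e).mp (by simpa [e] using hv)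
  exact hw (by simpa using congrArg (· w) hzero)

theorem stmt_7 (F V : Type*) [Field F] [AddCommGroup V] [Module F V]
    (n : ℕ) (hn : 1 < n) (D : (Fin n → V) → F)
    (hD : IsDeterminant F V n D) (v : Fin n → V) :
    D v ≠ 0 ↔ LinearIndependent F v :=
  stmt_7_general F V n D hD v
end

section
/- Let F be a field and n ≥ 1. If D is an n-determinant on F^n with D(e_1,…,e_n) = 1 (where e_1,…,e_n is the standard basis of F^n), then for every n-tuple of vectors v_1, …, v_n in F^n, D(v_1,…,v_n) equals the standard determinant of the n×n matrix over F whose i-th row is v_i. -/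
theorem stmt_15 (F : Type*) [Field F] (n : ℕ) (hn : 1 ≤ n)
    (D : (Fin n → (Fin n → F)) → F)
    (hD : IsDeterminant F (Fin n → F) n D)
    (h1 : D (fun i => Pi.single i 1) = 1) :
    ∀ v : Fin n → (Fin n → F), D v = Matrix.det (Matrix.of v) := by
  obtain ⟨-, hmain, hrank⟩ := hD
  have hcard : Fintype.card (Fin n) = Module.finrank F (Fin n → F) :=
    (Fintype.card_fin n).trans hrank.symm
  -- D vanishes on linearly dependent tuples
  have hdep : ∀ v : Fin n → (Fin n → F), ¬ LinearIndependent F v → D v = 0 := by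
    intro v hv
    by_contra h0
    refine hv (linearIndependent_of_top_le_span_of_card_eq_finrank ?_ hcard)
    by_contra hsp
    obtain ⟨b, -, hb⟩ := SetLike.not_le_iff_exists.mp hsp
    have hmem : D v • b ∈ Submodule.span F (Set.range v) := by
      rw [hmain v b]
      exact Submodule.sum_mem _ fun k _ =>
        Submodule.smul_mem _ _ (Submodule.subset_span ⟨k, rfl⟩)
    exact hb (by simpa [smul_smul, inv_mul_cancel₀ h0] using
      Submodule.smul_mem _ (D v)⁻¹ hmem)
  -- D is linear in each slot
  have hlin : ∀ (v : Fin n → Fin n → F) (k : Fin n),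
      ∃ L : (Fin n → F) →ₗ[F] F, ∀ b, D (Function.update v k b) = L b := by
    intro v k
    by_cases h : ∃ u, LinearIndependent F (Function.update v k u)
    · obtain ⟨u, hu⟩ := h
      have : Nonempty (Fin n) := ⟨⟨0, hn⟩⟩
      let B := basisOfLinearIndependentOfCardEqFinrank hu hcard
      have hB : ⇑B = Function.update v k u := coe_basisOfLinearIndependentOfCardEqFinrank hu hcard
      refine ⟨D (Function.update v k u) • B.coord k, fun b => ?_⟩
      have hrep : ∑ j, (D (Function.update (Function.update v k u) j b)
          - D (Function.update v k u) * B.repr b j) • Function.update v k u j = 0 := by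
        have h1 := hmain (Function.update v k u) b
        have h2 : D (Function.update v k u) • b
            = ∑ j, (D (Function.update v k u) * B.repr b j) • Function.update v k u j := by
          conv_lhs => rw [← B.sum_repr b]
          rw [Finset.smul_sum]
          refine Finset.sum_congr rfl fun j _ => ?_
          rw [hB, smul_smul]
        simp only [sub_smul, Finset.sum_sub_distrib, ← h1, ← h2, sub_self]
      have := Fintype.linearIndependent_iff.mp hu _ hrep k
      have hk := sub_eq_zero.mp this
      rw [Function.update_idem] at hk
      rw [hk]
      simp [Module.Basis.coord_apply]
    · push_neg at h
      exact ⟨0, fun b => by rw [hdep _ (h b)]; simp⟩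
  classical
  let M : MultilinearMap F (fun _ : Fin n => (Fin n → F)) F :=
    { toFun := D
      map_update_add' := by
        intro dec v k u w
        rw [Subsingleton.elim dec (instDecidableEqFin n)]
        obtain ⟨L, hL⟩ := hlin v k
        simp [hL]
      map_update_smul' := by
        intro dec v k c u
        rw [Subsingleton.elim dec (instDecidableEqFin n)]
        obtain ⟨L, hL⟩ := hlin v k
        simp [hL] }
  let A : (Fin n → F) [⋀^Fin n]→ₗ[F] F :=
    { M with
      map_eq_zero_of_eq' := fun v i j hij hne =>
        hdep v fun hli => hne (hli.injective hij) }
  intro v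
  have hA : ∀ w, D w = A w := fun _ => rfl
  have hbf : ⇑(Pi.basisFun F (Fin n)) = fun i => Pi.single i (1 : F) :=
    funext fun i => by simp
  have he : A ⇑(Pi.basisFun F (Fin n)) = 1 := by
    rw [← hA, hbf, h1]
  have hsm := A.eq_smul_basis_det (Pi.basisFun F (Fin n))
  rw [hA v, hsm]
  simp only [AlternatingMap.smul_apply, he, smul_eq_mul, one_mul, Pi.basisFun_det]
  rfl
end
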